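/- arXiv:0903.0683 — 2 statements merged into one kernel-verified Lean document; each statement's English description precedes it below -/
import Mathlib

section
/- For all 0 < x < 1 and 0 < y < 1, L(x) + L(y) = L(xy) + L(x(1−y)/(1−xy)) + L(y(1−x)/(1−xy)) (Abel's functional equation for the Rogers L-function). -/
open Real

noncomputable def Li2 (x : ℝ) : ℝ := -∫ t in (0:ℝ)..x, Real.log (1 - t) / t

noncomputable def rogersL (x : ℝ) : ℝ :=
  Li2 x + (1/2) * Real.log |x| * Real.log (1 - x)

open Set Filter MeasureTheory

/-!
Fix `x`. As a function of `t`, the difference of the two sides of Abel's equation is continuous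
on `[0, 1)` and vanishes at `t = 0`: Rogers' correction term makes `L` continuous at `0` with
`L 0 = 0`, since `log |t| * log (1 - t) = (t * log t) * (log (1 - t) / t)`. On `(0, 1)` its
derivative is zero: `L' u = -(log (1 - u) / u + log u / (1 - u)) / 2`, and after expanding the
logarithms of the five arguments in terms of `log x`, `log t`, `log (1 - x)`, `log (1 - t)` and
`log (1 - x t)`, every coefficient cancels.
-/

lemma dslope_log_one_sub_of_ne {t : ℝ} (ht : t ≠ 0) :
    dslope (fun s => log (1 - s)) 0 t = log (1 - t) / t := by
  simp [dslope_of_ne _ ht, slope_def_field]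

lemma continuousOn_dslope_log_one_sub :
    ContinuousOn (dslope (fun s : ℝ => log (1 - s)) 0) (Iio 1) := by
  refine (continuousOn_dslope (Iio_mem_nhds one_pos)).2 ⟨?_, ?_⟩
  · exact continuousOn_const.sub continuousOn_id |>.log fun s hs => (sub_pos.2 hs).ne'
  · exact ((differentiableAt_const _).sub differentiableAt_id).log (by norm_num)

-- `dslope` fills in the removable singularity of `log (1 - t) / t` at `0`.
lemma Li2_eq_neg_integral_dslope (x : ℝ) :
    Li2 x = -∫ t in (0:ℝ)..x, dslope (fun s => log (1 - s)) 0 t := by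
  rw [Li2, intervalIntegral.integral_congr_ae]
  filter_upwards [Measure.ae_ne volume 0] with t ht _
  exact (dslope_log_one_sub_of_ne ht).symm

lemma hasDerivAt_Li2_dslope {u : ℝ} (hu : u < 1) :
    HasDerivAt Li2 (-dslope (fun s => log (1 - s)) 0 u) u := by
  have hcont := continuousOn_dslope_log_one_sub
  have hint : IntervalIntegrable (dslope (fun s : ℝ => log (1 - s)) 0) volume 0 u :=
    (hcont.mono (ordConnected_Iio.uIcc_subset one_pos hu)).intervalIntegrable
  have := (intervalIntegral.integral_hasDerivAt_right hint
    (hcont.stronglyMeasurableAtFilter isOpen_Iio u hu)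
    (hcont.continuousAt (Iio_mem_nhds hu))).neg
  exact this.congr_of_eventuallyEq (Eventually.of_forall Li2_eq_neg_integral_dslope)

lemma hasDerivAt_Li2 {u : ℝ} (hu0 : u ≠ 0) (hu1 : u < 1) :
    HasDerivAt Li2 (-(log (1 - u) / u)) u :=
  dslope_log_one_sub_of_ne hu0 ▸ hasDerivAt_Li2_dslope hu1

lemma rogersL_eq_Li2_add_mul_log_mul_dslope (t : ℝ) :
    rogersL t = Li2 t + 1 / 2 * (t * log t) * dslope (fun s => log (1 - s)) 0 t := by
  rcases eq_or_ne t 0 with rfl | ht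
  · simp [rogersL]
  · rw [rogersL, log_abs, dslope_log_one_sub_of_ne ht]
    field_simp

lemma rogersL_zero : rogersL 0 = 0 := by
  simp [rogersL, Li2]

lemma continuousOn_rogersL : ContinuousOn rogersL (Iio 1) := by
  have hLi2 : ContinuousOn Li2 (Iio 1) := fun u hu =>
    (hasDerivAt_Li2_dslope hu).continuousAt.continuousWithinAt
  simp_rw [funext rogersL_eq_Li2_add_mul_log_mul_dslope]
  exact hLi2.add <| (continuousOn_const.mul continuous_mul_log.continuousOn).mul
    continuousOn_dslope_log_one_sub

lemma hasDerivAt_rogersL {u : ℝ} (hu0 : 0 < u) (hu1 : u < 1) :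
    HasDerivAt rogersL (-(1 / 2) * (log (1 - u) / u + log u / (1 - u))) u := by
  have hlog : HasDerivAt (fun v => log (1 - v)) (-1 / (1 - u)) u := by
    simpa using ((hasDerivAt_id u).const_sub 1).log (sub_pos.2 hu1).ne'
  have := (hasDerivAt_Li2 hu0.ne' hu1).add (((hasDerivAt_log hu0.ne').const_mul (1 / 2)).mul hlog)
  refine (this.congr_deriv ?_).congr_of_eventuallyEq ?_
  · field_simp [(sub_pos.2 hu1).ne']
    ring
  · filter_upwards [Ioi_mem_nhds hu0] with v hv
    rw [rogersL, abs_of_pos hv]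
    rfl

lemma HasDerivAt.rogersL {f : ℝ → ℝ} {f' t : ℝ} (hf : HasDerivAt f f' t) (h0 : 0 < f t)
    (h1 : f t < 1) :
    HasDerivAt (fun s => _root_.rogersL (f s))
      (-(1 / 2) * (Real.log (1 - f t) / f t + Real.log (f t) / (1 - f t)) * f') t :=
  (hasDerivAt_rogersL h0 h1).comp t hf

noncomputable def abelDefect (x t : ℝ) : ℝ :=
  rogersL x + rogersL t - rogersL (x * t) - rogersL (x * (1 - t) / (1 - x * t))
    - rogersL (t * (1 - x) / (1 - x * t))

lemma abelDefect_zero_right (x : ℝ) : abelDefect x 0 = 0 := by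
  simp [abelDefect, rogersL_zero]

section Abel

variable {x t : ℝ}

lemma one_sub_mul_one_sub_div (h : 1 - x * t ≠ 0) :
    1 - x * (1 - t) / (1 - x * t) = (1 - x) / (1 - x * t) := by
  rw [eq_div_iff h, sub_mul, div_mul_cancel₀ _ h]
  ring

lemma one_sub_mul_one_sub_div' (h : 1 - x * t ≠ 0) :
    1 - t * (1 - x) / (1 - x * t) = (1 - t) / (1 - x * t) := by
  rw [eq_div_iff h, sub_mul, div_mul_cancel₀ _ h]
  ring

lemma hasDerivAt_mul_one_sub_div (h : 1 - x * t ≠ 0) :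
    HasDerivAt (fun s => x * (1 - s) / (1 - x * s)) (-(x * (1 - x)) / (1 - x * t) ^ 2) t := by
  have := (((hasDerivAt_id t).const_sub 1).const_mul x).div
    (((hasDerivAt_id t).const_mul x).const_sub 1) h
  refine this.congr_deriv ?_
  simp only [id]
  ring

lemma hasDerivAt_mul_one_sub_div' (h : 1 - x * t ≠ 0) :
    HasDerivAt (fun s => s * (1 - x) / (1 - x * s)) ((1 - x) / (1 - x * t) ^ 2) t := by
  have := ((hasDerivAt_id t).mul_const (1 - x)).div
    (((hasDerivAt_id t).const_mul x).const_sub 1) h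
  refine this.congr_deriv ?_
  simp only [id]
  ring

lemma continuousOn_abelDefect (hx : x < 1) : ContinuousOn (abelDefect x) (Ico 0 1) := by
  have hD : ∀ s ∈ Ico (0:ℝ) 1, 0 < 1 - x * s := fun s hs => by nlinarith [hs.1, hs.2]
  have hL := continuousOn_rogersL
  refine (((continuousOn_const.add (hL.mono fun s hs => hs.2)).sub ?_).sub ?_).sub ?_
  · exact hL.comp (continuousOn_const.mul continuousOn_id) fun s hs => by
      simpa using (sub_pos.1 (hD s hs))
  · refine hL.comp ?_ fun s hs => ?_
    · exact (continuousOn_const.mul (continuousOn_const.sub continuousOn_id)).div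
        (continuousOn_const.sub (continuousOn_const.mul continuousOn_id)) fun s hs => (hD s hs).ne'
    · rw [mem_Iio, ← sub_pos, one_sub_mul_one_sub_div (hD s hs).ne']
      exact div_pos (sub_pos.2 hx) (hD s hs)
  · refine hL.comp ?_ fun s hs => ?_
    · exact (continuousOn_id.mul continuousOn_const).div
        (continuousOn_const.sub (continuousOn_const.mul continuousOn_id)) fun s hs => (hD s hs).ne'
    · rw [mem_Iio, ← sub_pos, one_sub_mul_one_sub_div' (hD s hs).ne']
      exact div_pos (sub_pos.2 hs.2) (hD s hs)

lemma hasDerivAt_abelDefect (hx0 : 0 < x) (hx1 : x < 1) (ht0 : 0 < t) (ht1 : t < 1) :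
    HasDerivAt (abelDefect x) 0 t := by
  have hD : 0 < 1 - x * t := by nlinarith
  have h1x : 0 < 1 - x := sub_pos.2 hx1
  have h1t : 0 < 1 - t := sub_pos.2 ht1
  have hu2 := one_sub_mul_one_sub_div hD.ne'
  have hu3 := one_sub_mul_one_sub_div' hD.ne'
  have := ((((hasDerivAt_const t (rogersL x)).add (hasDerivAt_rogersL ht0 ht1)).sub
    (((hasDerivAt_id t).const_mul x).rogersL (by simp; positivity) (by simp; linarith))).sub
    ((hasDerivAt_mul_one_sub_div hD.ne').rogersL (by positivity)
      (by rw [← sub_pos, hu2]; positivity))).sub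
    ((hasDerivAt_mul_one_sub_div' hD.ne').rogersL (by positivity)
      (by rw [← sub_pos, hu3]; positivity))
  refine this.congr_deriv ?_
  simp only [id, hu2, hu3]
  rw [log_mul hx0.ne' ht0.ne', log_div h1x.ne' hD.ne', log_div h1t.ne' hD.ne',
    log_div (mul_pos hx0 h1t).ne' hD.ne', log_div (mul_pos ht0 h1x).ne' hD.ne',
    log_mul hx0.ne' h1t.ne', log_mul ht0.ne' h1x.ne']
  -- `field_simp` normalises the denominator to `1 - t * x`
  have hD' : 1 - t * x ≠ 0 := by rw [mul_comm]; exact hD.ne'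
  field_simp
  ring

lemma abelDefect_eq_zero (hx0 : 0 < x) (hx1 : x < 1) (ht0 : 0 < t) (ht1 : t < 1) :
    abelDefect x t = 0 := by
  obtain ⟨_, _, hslope⟩ := exists_hasDerivAt_eq_slope (abelDefect x) (fun _ => 0) ht0
    ((continuousOn_abelDefect hx1).mono (Icc_subset_Ico_right ht1))
    (fun c hc => hasDerivAt_abelDefect hx0 hx1 hc.1 (hc.2.trans ht1))
  rw [abelDefect_zero_right, eq_comm, div_eq_zero_iff] at hslope
  simpa [ht0.ne'] using hslope

end Abel

theorem rogersL_abel (x y : ℝ) (hx1 : 0 < x) (hx2 : x < 1) (hy1 : 0 < y) (hy2 : y < 1) :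
    rogersL x + rogersL y =
      rogersL (x * y) + rogersL (x * (1 - y) / (1 - x * y))
        + rogersL (y * (1 - x) / (1 - x * y)) := by
  have := abelDefect_eq_zero hx1 hx2 hy1 hy2
  rw [abelDefect] at this
  linarith
end

section
/- Let φ = (1+√5)/2. Then L(−1/φ) = −π²/15 and L(−φ) = −π²/10, where L is the extended Rogers L-function. -/
open Real

/-!
Write `ψ = -1/φ`, so that `ψ² = ψ + 1` and `1 - ψ = φ`. Landen's identity
`Li₂ x + Li₂ (x/(x-1)) = -½ log²(1-x)` at `x = ψ` and `x = -ψ`, the duplication formula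
`Li₂ (x²) = 2 (Li₂ x + Li₂ (-x))` at `ψ` and Euler's reflection formula
`Li₂ x + Li₂ (1-x) = π²/6 - log x log(1-x)` at `ψ²` form a linear system for `Li₂ ψ`,
`Li₂ (-ψ)`, `Li₂ ψ²` and `Li₂ (-φ)` with right-hand sides in `π²` and `log² φ`.

The functional equations are proved by differentiating, since `Li₂' x = -log(1-x)/x`. The constant
in the reflection formula is `Li₂ (1⁻) = ∑ 1/n² = π²/6`, by Abel's theorem applied to
`Li₂ x = ∑ xⁿ/n²`.
-/

open Set Filter Topology MeasureTheory intervalIntegral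

/-- `log (1 - t) / t`, made continuous at `0` by its limit `-1`. -/
noncomputable def logOneSubSlope : ℝ → ℝ := dslope (fun t ↦ log (1 - t)) 0

lemma logOneSubSlope_of_ne {t : ℝ} (ht : t ≠ 0) : logOneSubSlope t = log (1 - t) / t := by
  simp [logOneSubSlope, dslope_of_ne _ ht, slope_def_field]

lemma hasDerivAt_log_one_sub {t : ℝ} (ht : t ≠ 1) :
    HasDerivAt (fun t ↦ log (1 - t)) (-1 / (1 - t)) t := by
  simpa using ((hasDerivAt_id t).const_sub 1).log (sub_ne_zero.2 ht.symm)

lemma logOneSubSlope_zero : logOneSubSlope 0 = -1 := by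
  simp [logOneSubSlope, dslope_same, (hasDerivAt_log_one_sub zero_ne_one).deriv]

lemma mul_logOneSubSlope (t : ℝ) : t * logOneSubSlope t = log (1 - t) := by
  simpa [logOneSubSlope] using sub_smul_dslope (fun t ↦ log (1 - t)) 0 t

lemma continuousAt_logOneSubSlope {t : ℝ} (ht : t ≠ 1) : ContinuousAt logOneSubSlope t := by
  rcases eq_or_ne t 0 with rfl | ht0
  · exact continuousAt_dslope_same.2 (hasDerivAt_log_one_sub ht).differentiableAt
  · exact (continuousAt_dslope_of_ne ht0).2 (hasDerivAt_log_one_sub ht).continuousAt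

lemma continuousOn_logOneSubSlope : ContinuousOn logOneSubSlope (Iio 1) :=
  fun _ ht ↦ (continuousAt_logOneSubSlope (ne_of_lt ht)).continuousWithinAt

lemma hasSum_logOneSubSlope {t : ℝ} (ht : |t| < 1) :
    HasSum (fun n : ℕ ↦ t ^ n / (n + 1)) (-logOneSubSlope t) := by
  rcases eq_or_ne t 0 with rfl | ht0
  · rw [logOneSubSlope_zero, neg_neg]
    convert hasSum_single (f := fun n : ℕ ↦ (0:ℝ) ^ n / (n + 1)) 0 (fun n hn ↦ by simp [hn])
    simp
  · rw [logOneSubSlope_of_ne ht0, ← neg_div]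
    have h := (hasSum_pow_div_log_of_abs_lt_one ht).div_const t
    rwa [show (fun n : ℕ ↦ t ^ (n + 1) / (n + 1) / t) = fun n : ℕ ↦ t ^ n / (n + 1) by
      ext n; rw [pow_succ]; field_simp] at h

lemma Li2_eq_neg_integral_logOneSubSlope (x : ℝ) :
    Li2 x = -∫ t in (0:ℝ)..x, logOneSubSlope t := by
  rw [Li2, neg_inj]
  refine integral_congr_ae ?_
  filter_upwards [compl_mem_ae_iff.2 (measure_singleton (0:ℝ))] with t ht _
  exact (logOneSubSlope_of_ne ht).symm

@[simp]
lemma Li2_zero : Li2 0 = 0 := by simp [Li2]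

lemma hasDerivAt_Li2_s7 {x : ℝ} (hx : x < 1) : HasDerivAt Li2 (-logOneSubSlope x) x := by
  have hint : IntervalIntegrable logOneSubSlope volume 0 x :=
    (continuousOn_logOneSubSlope.mono fun t ht ↦
      ht.2.trans_lt (max_lt zero_lt_one hx)).intervalIntegrable
  rw [funext Li2_eq_neg_integral_logOneSubSlope]
  exact (integral_hasDerivAt_right hint
    (continuousOn_logOneSubSlope.stronglyMeasurableAtFilter isOpen_Iio x hx)
    (continuousAt_logOneSubSlope hx.ne)).neg

lemma IsOpen.eq_of_hasDerivAt_zero {s : Set ℝ} {f : ℝ → ℝ} (hs : IsOpen s)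
    (hs' : IsPreconnected s) (hf : ∀ z ∈ s, HasDerivAt f 0 z) {x y : ℝ} (hx : x ∈ s)
    (hy : y ∈ s) : f x = f y :=
  hs.is_const_of_deriv_eq_zero hs' (fun z hz ↦ (hf z hz).differentiableAt.differentiableWithinAt)
    (fun z hz ↦ (hf z hz).deriv) hx hy

lemma Li2_add_Li2_div_sub_one {x : ℝ} (hx : x < 1) :
    Li2 x + Li2 (x / (x - 1)) = -(log (1 - x) ^ 2 / 2) := by
  have hderiv : ∀ z ∈ Iio (1:ℝ),
      HasDerivAt (fun x ↦ Li2 x + Li2 (x / (x - 1)) + log (1 - x) ^ 2 / 2) 0 z := by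
    intro z (hz : z < 1)
    have hz1 : z - 1 ≠ 0 := by linarith
    have hu : z / (z - 1) < 1 := by rw [div_lt_one_of_neg (by linarith)]; linarith
    have hdiv : HasDerivAt (fun x ↦ x / (x - 1)) (-1 / (z - 1) ^ 2) z :=
      ((hasDerivAt_id z).div ((hasDerivAt_id z).sub_const 1) hz1).congr_deriv (by simp)
    refine (((hasDerivAt_Li2_s7 hz).add ((hasDerivAt_Li2_s7 hu).comp z hdiv)).add
      (((hasDerivAt_log_one_sub hz.ne).pow 2).div_const 2)).congr_deriv ?_
    rcases eq_or_ne z 0 with rfl | hz0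
    · simp [logOneSubSlope_zero]
    · have hz1' : 1 - z ≠ 0 := by linarith
      have h1u : 1 - z / (z - 1) = (1 - z)⁻¹ := by field_simp; ring
      rw [logOneSubSlope_of_ne hz0, logOneSubSlope_of_ne (div_ne_zero hz0 hz1), h1u, log_inv]
      field_simp
      ring
  exact eq_neg_of_add_eq_zero_left <| by
    simpa using isOpen_Iio.eq_of_hasDerivAt_zero isPreconnected_Iio hderiv hx
      (mem_Iio.2 zero_lt_one)

lemma Li2_sq {x : ℝ} (hx : |x| < 1) : Li2 (x ^ 2) = 2 * (Li2 x + Li2 (-x)) := by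
  have hderiv : ∀ z ∈ Ioo (-1:ℝ) 1,
      HasDerivAt (fun x ↦ Li2 (x ^ 2) - 2 * (Li2 x + Li2 (-x))) 0 z := by
    rintro z ⟨hz₁, hz₂⟩
    have hsq : z ^ 2 < 1 := by nlinarith
    have hneg : HasDerivAt (fun x ↦ Li2 (-x)) (-logOneSubSlope (-z) * -1) z :=
      (hasDerivAt_Li2_s7 (by linarith)).comp z (hasDerivAt_neg z)
    refine (((hasDerivAt_Li2_s7 hsq).comp (h := fun x ↦ x ^ 2) z (hasDerivAt_pow 2 z)).sub
      (((hasDerivAt_Li2_s7 hz₂).add hneg).const_mul 2)).congr_deriv ?_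
    rcases eq_or_ne z 0 with rfl | hz0
    · simp [logOneSubSlope_zero]
    · rw [logOneSubSlope_of_ne hz0, logOneSubSlope_of_ne (neg_ne_zero.2 hz0),
        logOneSubSlope_of_ne (pow_ne_zero 2 hz0),
        show 1 - z ^ 2 = (1 - z) * (1 - -z) by ring, log_mul (by linarith) (by linarith)]
      field_simp
      ring
  simpa [sub_eq_zero] using isOpen_Ioo.eq_of_hasDerivAt_zero isPreconnected_Ioo hderiv
    (abs_lt.1 hx) ⟨neg_one_lt_zero, zero_lt_one⟩

lemma hasSum_Li2 {x : ℝ} (hx : |x| < 1) :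
    HasSum (fun n : ℕ ↦ 1 / (n : ℝ) ^ 2 * x ^ n) (Li2 x) := by
  have habs : ∀ t ∈ uIoc 0 x, |t| ≤ |x| := by
    intro t ht
    rcases mem_uIoc.1 ht with ⟨h₁, h₂⟩ | ⟨h₁, h₂⟩
    · exact abs_le_abs h₂ (by linarith)
    · exact abs_le_abs_of_nonpos h₂ h₁.le
  have hterms : HasSum (fun n : ℕ ↦ ∫ t in (0:ℝ)..x, t ^ n / (n + 1))
      (∫ t in (0:ℝ)..x, -logOneSubSlope t) :=
    hasSum_integral_of_dominated_convergence (fun n _ ↦ |x| ^ n)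
      (fun n ↦ (by fun_prop : Continuous fun t : ℝ ↦ t ^ n / (n + 1)).aestronglyMeasurable)
      (fun n ↦ ae_of_all _ fun t ht ↦ by
        rw [norm_div, norm_pow, Real.norm_eq_abs, Real.norm_eq_abs,
          abs_of_pos (n.cast_add_one_pos (α := ℝ))]
        exact div_le_self (by positivity) (by linarith [n.cast_nonneg (α := ℝ)]) |>.trans
          (pow_le_pow_left₀ (abs_nonneg t) (habs t ht) n))
      (ae_of_all _ fun _ _ ↦ summable_geometric_of_lt_one (abs_nonneg x) hx)
      intervalIntegrable_const
      (ae_of_all _ fun t ht ↦ hasSum_logOneSubSlope ((habs t ht).trans_lt hx))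
  rw [intervalIntegral.integral_neg, ← Li2_eq_neg_integral_logOneSubSlope] at hterms
  have hshift : HasSum (fun n : ℕ ↦ 1 / ((n + 1 : ℕ) : ℝ) ^ 2 * x ^ (n + 1)) (Li2 x) :=
    hterms.congr_fun fun n ↦ by
      rw [intervalIntegral.integral_div, integral_pow]
      push_cast
      field_simp
      ring
  -- the `n = 0` term `1 / 0 ^ 2 * x ^ 0` of the claimed series is `0`
  exact (hasSum_nat_add_iff' 1).1 (by simpa using hshift)

lemma tendsto_Li2_nhdsLT_one : Tendsto Li2 (𝓝[<] 1) (𝓝 (π ^ 2 / 6)) := by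
  refine (Real.tendsto_tsum_powerSeries_nhdsWithin_lt hasSum_zeta_two.tendsto_sum_nat).congr' ?_
  filter_upwards [Ioo_mem_nhdsLT (by norm_num : (-1:ℝ) < 1)] with x hx
  exact (hasSum_Li2 (abs_lt.2 hx)).tsum_eq

lemma Li2_add_Li2_one_sub {x : ℝ} (hx : x ∈ Ioo (0:ℝ) 1) :
    Li2 x + Li2 (1 - x) = π ^ 2 / 6 - log x * log (1 - x) := by
  set R : ℝ → ℝ := fun x ↦ Li2 x + Li2 (1 - x) + log x * log (1 - x) with hR
  have hderiv : ∀ z ∈ Ioo (0:ℝ) 1, HasDerivAt R 0 z := by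
    rintro z ⟨hz₀, hz₁⟩
    refine (((hasDerivAt_Li2_s7 hz₁).add ((hasDerivAt_Li2_s7 (by linarith : 1 - z < 1)).comp z
      ((hasDerivAt_id z).const_sub 1))).add
      ((hasDerivAt_log hz₀.ne').mul (hasDerivAt_log_one_sub hz₁.ne))).congr_deriv ?_
    have : 1 - z ≠ 0 := by linarith
    rw [logOneSubSlope_of_ne hz₀.ne', logOneSubSlope_of_ne this, sub_sub_cancel]
    field_simp
    ring
  -- `log y = (1 - y) * logOneSubSlope (1 - y)` makes `log y * log (1 - y)` continuous at `1`.
  have hrest : ContinuousAt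
      (fun y ↦ Li2 (1 - y) + logOneSubSlope (1 - y) * ((1 - y) * log (1 - y))) 1 := by
    have h1 : ContinuousAt (fun y : ℝ ↦ 1 - y) 1 := by fun_prop
    refine ((hasDerivAt_Li2_s7 (by norm_num)).continuousAt.comp_of_eq h1 (sub_self 1)).add
      (((continuousAt_logOneSubSlope zero_ne_one).comp_of_eq h1 (sub_self 1)).mul
        (continuous_mul_log.continuousAt.comp h1))
  have hlim : Tendsto R (𝓝[<] 1) (𝓝 (π ^ 2 / 6)) := by
    have := tendsto_Li2_nhdsLT_one.add (hrest.tendsto.mono_left nhdsWithin_le_nhds)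
    simp only [sub_self, Li2_zero, log_zero, mul_zero, add_zero] at this
    refine this.congr fun y ↦ ?_
    have hlog : (1 - y) * logOneSubSlope (1 - y) = log y := by
      rw [mul_logOneSubSlope, sub_sub_cancel]
    show _ = Li2 y + Li2 (1 - y) + log y * log (1 - y)
    rw [← hlog]
    ring
  have hconst : R =ᶠ[𝓝[<] 1] fun _ ↦ R x := by
    filter_upwards [Ioo_mem_nhdsLT zero_lt_one] with y hy
    exact isOpen_Ioo.eq_of_hasDerivAt_zero isPreconnected_Ioo hderiv hy hx
  have := tendsto_nhds_unique (hlim.congr' hconst) tendsto_const_nhds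
  simp only [hR] at this
  linarith

section GoldenRatio

open goldenRatio

lemma goldenConj_div_goldenConj_sub_one : ψ / (ψ - 1) = ψ ^ 2 := by
  rw [show ψ - 1 = -φ by rw [← one_sub_goldenRatio]; ring, div_neg, div_eq_mul_inv,
    inv_goldenRatio]
  ring

lemma neg_goldenConj_div_neg_goldenConj_sub_one : -ψ / (-ψ - 1) = -φ := by
  rw [show -ψ - 1 = -ψ ^ 2 by rw [goldenConj_sq]; ring, neg_div_neg_eq, sq,
    div_mul_cancel_right₀ goldenConj_ne_zero, inv_goldenConj]

lemma log_goldenConj : log ψ = -log φ := by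
  rw [← log_neg_eq_log, ← inv_goldenRatio, log_inv]

lemma Li2_goldenConj_and_Li2_neg_goldenConj :
    Li2 ψ = log φ ^ 2 / 2 - π ^ 2 / 15 ∧ Li2 (-ψ) = π ^ 2 / 10 - log φ ^ 2 := by
  have hψ₁ : -1 < ψ := neg_one_lt_goldenConj
  have hψ₀ : ψ < 0 := goldenConj_neg
  have landen := Li2_add_Li2_div_sub_one (hψ₀.trans one_pos)
  rw [goldenConj_div_goldenConj_sub_one, one_sub_goldenRatio] at landen
  have dup := Li2_sq (abs_lt.2 ⟨hψ₁, hψ₀.trans one_pos⟩)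
  have reflection := Li2_add_Li2_one_sub (x := ψ ^ 2) ⟨by nlinarith, by nlinarith⟩
  rw [show 1 - ψ ^ 2 = -ψ by rw [goldenConj_sq]; ring, log_pow, log_neg_eq_log,
    log_goldenConj] at reflection
  constructor
  · linear_combination (3 / 5) * landen - (1 / 5) * dup - (2 / 5) * reflection
  · linear_combination (-2 / 5) * landen - (1 / 5) * dup + (3 / 5) * reflection

lemma Li2_neg_goldenRatio : Li2 (-φ) = -(π ^ 2 / 10) - log φ ^ 2 := by
  have landen := Li2_add_Li2_div_sub_one (x := -ψ) (by linarith [neg_one_lt_goldenConj])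
  rw [neg_goldenConj_div_neg_goldenConj_sub_one, sub_neg_eq_add, add_comm 1, ← goldenConj_sq,
    log_pow, log_goldenConj, Li2_goldenConj_and_Li2_neg_goldenConj.2] at landen
  linear_combination landen

lemma rogersL_goldenConj : rogersL ψ = -(π ^ 2 / 15) := by
  rw [rogersL, Li2_goldenConj_and_Li2_neg_goldenConj.1, log_abs, log_goldenConj,
    one_sub_goldenRatio]
  ring

lemma rogersL_neg_goldenRatio : rogersL (-φ) = -(π ^ 2 / 10) := by
  rw [rogersL, Li2_neg_goldenRatio, log_abs, log_neg_eq_log, sub_neg_eq_add, add_comm 1,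
    ← goldenRatio_sq, log_pow]
  push_cast
  ring

end GoldenRatio

theorem rogersL_neg_golden (φ : ℝ) (hφ : φ = (1 + Real.sqrt 5) / 2) :
    rogersL (-(1 / φ)) = -(π ^ 2 / 15) ∧ rogersL (-φ) = -(π ^ 2 / 10) := by
  obtain rfl : φ = goldenRatio := hφ
  rw [one_div, inv_goldenRatio, neg_neg]
  exact ⟨rogersL_goldenConj, rogersL_neg_goldenRatio⟩
end
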